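/- (Lemma 2) Consider a finite MDP with finite nonempty state set S, finite nonempty action set A, transition probabilities p : S × A × S → ℝ with p(s'|s,a) ≥ 0 and Σ_{s'} p(s'|s,a) = 1, reward r : S × A → ℝ, discount γ ∈ [0,1), and behavior policy μ : S × A → ℝ with μ(a|s) ≥ 0 and Σ_a μ(a|s) = 1. Let 0 < τ₁ < τ₂ < 1, and let V_{τ₁} and V_{τ₂} be τ₁- and τ₂-expectile value functions respectively. Then V_{τ₁}(s) ≤ V_{τ₂}(s) for every state s. -/
import Mathlib


open Finset

/-- `m` is the `τ`-expectile of the values `f` under the weights `w`. -/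
def IsExpectile {A : Type*} [Fintype A] (τ : ℝ) (w f : A → ℝ) (m : ℝ) : Prop :=
  τ * ∑ a, w a * max (f a - m) 0 = (1 - τ) * ∑ a, w a * max (m - f a) 0

/-- `V` is a `τ`-expectile value function for the finite MDP `(p, r, γ)` and behavior
policy `μ`. -/
def IsExpectileValueFn {S A : Type*} [Fintype S] [Fintype A]
    (p : S → A → S → ℝ) (r : S → A → ℝ) (γ : ℝ) (μ : S → A → ℝ)
    (τ : ℝ) (V : S → ℝ) : Prop :=
  ∀ s, IsExpectile τ (μ s) (fun a => r s a + γ * ∑ s', p s a s' * V s') (V s)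

/-- Pointwise key inequality: the function `d ↦ τ·d⁺ − (1−τ)·(−d)⁺` increases by at least
`c·δ` (where `c = min τ (1−τ)`) when `d` increases by at least `δ ≥ 0`. -/
lemma phi_key (τ c d₁ d₂ δ : ℝ) (h0 : 0 ≤ τ) (h1 : τ ≤ 1)
    (hc0 : 0 ≤ c) (hc1 : c ≤ τ) (hc2 : c ≤ 1 - τ) (hδ : 0 ≤ δ) (hd : d₁ + δ ≤ d₂) :
    τ * max d₁ 0 - (1 - τ) * max (-d₁) 0 + c * δ
      ≤ τ * max d₂ 0 - (1 - τ) * max (-d₂) 0 := by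
  rcases le_total d₁ 0 with h₁ | h₁ <;> rcases le_total d₂ 0 with h₂ | h₂
  · rw [max_eq_right h₁, max_eq_left (neg_nonneg.mpr h₁),
      max_eq_right h₂, max_eq_left (neg_nonneg.mpr h₂)]
    nlinarith
  · rw [max_eq_right h₁, max_eq_left (neg_nonneg.mpr h₁),
      max_eq_left h₂, max_eq_right (neg_nonpos.mpr h₂)]
    nlinarith [mul_nonneg (sub_nonneg.mpr hc1) h₂, mul_nonneg (sub_nonneg.mpr hc2) (neg_nonneg.mpr h₁), mul_le_mul_of_nonneg_left (show δ ≤ d₂ - d₁ by linarith) hc0]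
  · rw [max_eq_left h₁, max_eq_right (neg_nonpos.mpr h₁),
      max_eq_right h₂, max_eq_left (neg_nonneg.mpr h₂)]
    nlinarith
  · rw [max_eq_left h₁, max_eq_right (neg_nonpos.mpr h₁),
      max_eq_left h₂, max_eq_right (neg_nonpos.mpr h₂)]
    nlinarith

/-- Lemma 2: For `0 < τ₁ < τ₂ < 1`, the `τ₁`-expectile value function
is pointwise at most the `τ₂`-expectile value function. -/
theorem expectile_value_function_mono_in_tau
    {S A : Type*} [Fintype S] [Nonempty S] [Fintype A] [Nonempty A]
    (p : S → A → S → ℝ) (hp : ∀ s a s', 0 ≤ p s a s')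
    (hps : ∀ s a, ∑ s', p s a s' = 1)
    (r : S → A → ℝ) (γ : ℝ) (hγ : γ ∈ Set.Ico (0 : ℝ) 1)
    (μ : S → A → ℝ) (hμ : ∀ s a, 0 ≤ μ s a) (hμs : ∀ s, ∑ a, μ s a = 1)
    (τ₁ τ₂ : ℝ) (h0 : 0 < τ₁) (h12 : τ₁ < τ₂) (h1 : τ₂ < 1)
    (V₁ V₂ : S → ℝ)
    (hV₁ : IsExpectileValueFn p r γ μ τ₁ V₁)
    (hV₂ : IsExpectileValueFn p r γ μ τ₂ V₂) :
    ∀ s, V₁ s ≤ V₂ s := by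
  obtain ⟨hγ0, hγ1⟩ := hγ
  -- pick the state maximizing V₁ - V₂
  obtain ⟨s₀, -, hs₀⟩ := Finset.exists_max_image (univ : Finset S)
    (fun s => V₁ s - V₂ s) univ_nonempty
  set Δ : ℝ := V₁ s₀ - V₂ s₀ with hΔdef
  have hs₀' : ∀ s, V₁ s - V₂ s ≤ Δ := fun s => hs₀ s (mem_univ s)
  suffices hΔ : Δ ≤ 0 by
    intro s
    have := hs₀' s
    linarith
  by_contra hΔpos
  push_neg at hΔpos
  set w : A → ℝ := μ s₀ with hw
  set f₁ : A → ℝ := fun a => r s₀ a + γ * ∑ s', p s₀ a s' * V₁ s' with hf₁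
  set f₂ : A → ℝ := fun a => r s₀ a + γ * ∑ s', p s₀ a s' * V₂ s' with hf₂
  set m₁ : ℝ := V₁ s₀ with hm₁
  set m₂ : ℝ := V₂ s₀ with hm₂
  have h₁ : τ₁ * ∑ a, w a * max (f₁ a - m₁) 0
      = (1 - τ₁) * ∑ a, w a * max (m₁ - f₁ a) 0 := hV₁ s₀
  have h₂ : τ₂ * ∑ a, w a * max (f₂ a - m₂) 0
      = (1 - τ₂) * ∑ a, w a * max (m₂ - f₂ a) 0 := hV₂ s₀
  set c : ℝ := min τ₁ (1 - τ₁) with hc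
  have hcpos : 0 < c := lt_min h0 (by linarith)
  set δ : ℝ := (1 - γ) * Δ with hδdef
  have hδpos : 0 < δ := mul_pos (by linarith) hΔpos
  -- pointwise bound on the f's
  have hff : ∀ a, f₁ a ≤ f₂ a + γ * Δ := by
    intro a
    have hsum : ∑ s', p s₀ a s' * V₁ s' ≤ (∑ s', p s₀ a s' * V₂ s') + Δ := by
      have : ∑ s', p s₀ a s' * V₁ s' - ∑ s', p s₀ a s' * V₂ s'
          = ∑ s', p s₀ a s' * (V₁ s' - V₂ s') := by
        rw [← Finset.sum_sub_distrib]; exact Finset.sum_congr rfl fun s' _ => by ring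
      have hle : ∑ s', p s₀ a s' * (V₁ s' - V₂ s') ≤ ∑ s', p s₀ a s' * Δ :=
        Finset.sum_le_sum fun s' _ =>
          mul_le_mul_of_nonneg_left (hs₀' s') (hp s₀ a s')
      have hΔsum : ∑ s', p s₀ a s' * Δ = Δ := by
        rw [← Finset.sum_mul, hps s₀ a, one_mul]
      linarith
    simp only [hf₁, hf₂]
    nlinarith [mul_le_mul_of_nonneg_left hsum hγ0]
  -- pointwise key inequality
  have hkey : ∀ a ∈ (univ : Finset A),
      w a * (τ₁ * max (f₁ a - m₁) 0 - (1 - τ₁) * max (m₁ - f₁ a) 0 + c * δ)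
        ≤ w a * (τ₁ * max (f₂ a - m₂) 0 - (1 - τ₁) * max (m₂ - f₂ a) 0) := by
    intro a _
    apply mul_le_mul_of_nonneg_left _ (hμ s₀ a)
    have hd : (f₁ a - m₁) + δ ≤ f₂ a - m₂ := by
      have := hff a
      have hΔeq : m₁ - m₂ = Δ := by simp [hm₁, hm₂, hΔdef]
      simp only [hδdef]
      nlinarith
    have := phi_key τ₁ c (f₁ a - m₁) (f₂ a - m₂) δ (le_of_lt h0) (by linarith)
      (le_of_lt hcpos) (min_le_left _ _) (min_le_right _ _) (le_of_lt hδpos) hd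
    have e1 : -(f₁ a - m₁) = m₁ - f₁ a := by ring
    have e2 : -(f₂ a - m₂) = m₂ - f₂ a := by ring
    rw [e1, e2] at this
    exact this
  have hsum := Finset.sum_le_sum hkey
  -- compute both sides
  have hL : ∑ a, w a * (τ₁ * max (f₁ a - m₁) 0 - (1 - τ₁) * max (m₁ - f₁ a) 0 + c * δ)
      = τ₁ * ∑ a, w a * max (f₁ a - m₁) 0
        - (1 - τ₁) * ∑ a, w a * max (m₁ - f₁ a) 0 + c * δ := by
    have : ∀ a ∈ (univ : Finset A),
        w a * (τ₁ * max (f₁ a - m₁) 0 - (1 - τ₁) * max (m₁ - f₁ a) 0 + c * δ)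
          = τ₁ * (w a * max (f₁ a - m₁) 0) - (1 - τ₁) * (w a * max (m₁ - f₁ a) 0)
            + (c * δ) * w a := fun a _ => by ring
    rw [Finset.sum_congr rfl this]
    rw [Finset.sum_add_distrib, Finset.sum_sub_distrib, ← Finset.mul_sum,
      ← Finset.mul_sum, ← Finset.mul_sum, hμs s₀, mul_one]
  have hR : ∑ a, w a * (τ₁ * max (f₂ a - m₂) 0 - (1 - τ₁) * max (m₂ - f₂ a) 0)
      = τ₁ * ∑ a, w a * max (f₂ a - m₂) 0
        - (1 - τ₁) * ∑ a, w a * max (m₂ - f₂ a) 0 := by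
    have : ∀ a ∈ (univ : Finset A),
        w a * (τ₁ * max (f₂ a - m₂) 0 - (1 - τ₁) * max (m₂ - f₂ a) 0)
          = τ₁ * (w a * max (f₂ a - m₂) 0) - (1 - τ₁) * (w a * max (m₂ - f₂ a) 0) :=
      fun a _ => by ring
    rw [Finset.sum_congr rfl this, Finset.sum_sub_distrib, ← Finset.mul_sum,
      ← Finset.mul_sum]
  rw [hL, hR] at hsum
  -- RHS is ≤ 0 since τ₁ < τ₂
  have hA₂ : (0:ℝ) ≤ ∑ a, w a * max (f₂ a - m₂) 0 :=
    Finset.sum_nonneg fun a _ => mul_nonneg (hμ s₀ a) (le_max_right _ _)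
  have hB₂ : (0:ℝ) ≤ ∑ a, w a * max (m₂ - f₂ a) 0 :=
    Finset.sum_nonneg fun a _ => mul_nonneg (hμ s₀ a) (le_max_right _ _)
  have hRle : τ₁ * ∑ a, w a * max (f₂ a - m₂) 0
      - (1 - τ₁) * ∑ a, w a * max (m₂ - f₂ a) 0 ≤ 0 := by
    nlinarith
  nlinarith [mul_pos hcpos hδpos]
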